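/- arXiv:1706.03617 — 3 statements merged into one kernel-verified Lean document; each statement's English description precedes it below -/
import Mathlib

section
/- For every positive integer n that is not a perfect square, the number of overpartitions of n satisfies p̄(n) ≡ 0 (mod 4). -/
/-!
Each factor `(1 + q^k)/(1 - q^k) = 1 + 2 ∑_{m ≥ 1} q^{km}` has the form `1 + 2a`, and
`∏ (1 + 2aᵢ) ≡ 1 + 2 ∑ aᵢ (mod 4)`, so `p̄(n) ≡ 2 d(n) (mod 4)` for `n ≥ 1`, where `d(n)` counts the
divisors of `n`. When `n` is not a square, `d ↦ n / d` pairs the divisors without fixed points,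
so `d(n)` is even.
-/

open PowerSeries

/-- The formal power series `(1+q^k)/(1-q^k)` in `ℤ⟦q⟧`. -/
noncomputable def fps (k : ℕ) : PowerSeries ℤ :=
  (1 + (PowerSeries.X : PowerSeries ℤ) ^ k) *
    PowerSeries.invOfUnit (1 - (PowerSeries.X : PowerSeries ℤ) ^ k) 1

/-- The number of overpartitions of `n`: the coefficient of `q^n` in
`∏_{k≥1} (1+q^k)/(1-q^k)`.  Since each factor with `k > n` contributes only `1`
to coefficients up to degree `n`, the product may be truncated at `k = n`. -/
noncomputable def pbar (n : ℕ) : ℤ :=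
  PowerSeries.coeff (R := ℤ) n (∏ k ∈ Finset.Icc 1 n, fps k)

open Finset

theorem Nat.even_card_divisors_of_not_isSquare {n : ℕ} (h : ¬IsSquare n) :
    Even #n.divisors := by
  have hne : ∀ x ∈ n.divisorsAntidiagonal, x.1 ≠ x.2 := fun x hx hx12 =>
    h ⟨x.1, by rw [← (Nat.mem_divisorsAntidiagonal.1 hx).1, hx12]⟩
  have hswap : #{x ∈ n.divisorsAntidiagonal | x.2 < x.1} =
      #{x ∈ n.divisorsAntidiagonal | x.1 < x.2} :=
    card_nbij' Prod.swap Prod.swap (by intro x; simp_all [mul_comm])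
      (by intro x; simp_all [mul_comm]) (fun _ _ => rfl) (fun _ _ => rfl)
  have hcard : #n.divisors = #n.divisorsAntidiagonal := by
    rw [← Nat.map_div_right_divisors, card_map]
  have hcompl : {x ∈ n.divisorsAntidiagonal | ¬x.1 < x.2} =
      {x ∈ n.divisorsAntidiagonal | x.2 < x.1} :=
    filter_congr fun x hx => by rw [not_lt, (hne x hx).symm.le_iff_lt]
  rw [hcard, ← card_filter_add_card_filter_not (fun x : ℕ × ℕ => x.1 < x.2), hcompl, hswap]
  exact ⟨_, rfl⟩

theorem exists_prod_one_add_two_mul {R ι : Type*} [CommSemiring R] (s : Finset ι) (f : ι → R) :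
    ∃ c, ∏ i ∈ s, (1 + 2 * f i) = 1 + 2 * ∑ i ∈ s, f i + 4 * c := by
  classical
  induction s using Finset.induction_on with
  | empty => exact ⟨0, by simp⟩
  | insert a s ha ih =>
    obtain ⟨c, hc⟩ := ih
    refine ⟨c + f a * ∑ i ∈ s, f i + 2 * f a * c, ?_⟩
    rw [prod_insert ha, sum_insert ha, hc]
    ring

namespace PowerSeries

variable {R : Type*} [CommRing R]

theorem one_sub_X_pow_mul_invOfUnit {k : ℕ} (hk : k ≠ 0) :
    (1 - X ^ k : R⟦X⟧) * invOfUnit (1 - X ^ k) 1 = 1 :=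
  mul_invOfUnit _ _ (by simp [zero_pow hk])

theorem invOfUnit_one_sub_X_pow {k : ℕ} (hk : k ≠ 0) :
    invOfUnit (1 - X ^ k : R⟦X⟧) 1 = expand k hk (mk 1) := by
  have hexp : (1 - X ^ k : R⟦X⟧) * expand k hk (mk 1) = 1 := by
    simpa [mul_comm] using congrArg (expand k hk) (mk_one_mul_one_sub_eq_one (S := R))
  exact left_inv_eq_right_inv (by rw [mul_comm, one_sub_X_pow_mul_invOfUnit hk]) hexp

theorem coeff_invOfUnit_one_sub_X_pow {k : ℕ} (hk : k ≠ 0) (n : ℕ) :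
    coeff n (invOfUnit (1 - X ^ k : R⟦X⟧) 1) = if k ∣ n then 1 else 0 := by
  rw [invOfUnit_one_sub_X_pow hk, coeff_expand, coeff_mk, Pi.one_apply]

end PowerSeries

theorem fps_eq_one_add_two_mul {k : ℕ} (hk : k ≠ 0) :
    fps k = 1 + 2 * (invOfUnit (1 - X ^ k) 1 - 1) := by
  rw [fps]
  linear_combination -one_sub_X_pow_mul_invOfUnit (R := ℤ) hk

theorem pbar_modEq_two_mul_card_divisors {n : ℕ} (hn : n ≠ 0) :
    pbar n ≡ 2 * #n.divisors [ZMOD 4] := by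
  set G : ℕ → ℤ⟦X⟧ := fun k => invOfUnit (1 - X ^ k) 1
  obtain ⟨c, hc⟩ := exists_prod_one_add_two_mul (Icc 1 n) fun k => G k - 1
  have hprod : ∏ k ∈ Icc 1 n, fps k = ∏ k ∈ Icc 1 n, (1 + 2 * (G k - 1)) :=
    prod_congr rfl fun k hk => fps_eq_one_add_two_mul (by grind)
  have hfilter : {k ∈ Icc 1 n | k ∣ n} = n.divisors := by
    rw [Nat.divisors, Ico_add_one_right_eq_Icc]
  have hsum : ∑ k ∈ Icc 1 n, coeff n (G k - 1) = (#n.divisors : ℤ) := by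
    have hterm : ∀ k ∈ Icc 1 n, coeff n (G k - 1) = if k ∣ n then 1 else 0 := fun k hk => by
      rw [map_sub, coeff_invOfUnit_one_sub_X_pow (by grind), coeff_one, if_neg hn,
        sub_zero]
    rw [sum_congr rfl hterm, sum_boole, hfilter]
  have hpbar : pbar n = 2 * #n.divisors + 4 * coeff n c := by
    rw [pbar, hprod, hc, map_add, map_add, coeff_one, if_neg hn, ← map_ofNat C 2,
      ← map_ofNat C 4, coeff_C_mul, coeff_C_mul, map_sum, hsum, zero_add]
  rw [hpbar]
  exact Int.modEq_add_fac_self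

theorem pbar_nonsquare_mod_four_general (n : ℕ) (hsq : ¬ IsSquare n) :
    pbar n ≡ 0 [ZMOD 4] := by
  have hn : n ≠ 0 := by
    rintro rfl
    exact hsq ⟨0, rfl⟩
  obtain ⟨m, hm⟩ := Nat.even_card_divisors_of_not_isSquare hsq
  calc pbar n ≡ 2 * #n.divisors [ZMOD 4] := pbar_modEq_two_mul_card_divisors hn
    _ = 0 + 4 * m := by rw [hm]; push_cast; ring
    _ ≡ 0 [ZMOD 4] := Int.modEq_add_fac_self

/-- For every positive nonsquare integer `n`, `p̄(n) ≡ 0 (mod 4)`. -/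
theorem pbar_nonsquare_mod_four (n : ℕ) (hn : 1 ≤ n) (hsq : ¬ IsSquare n) :
    pbar n ≡ 0 [ZMOD 4] :=
  pbar_nonsquare_mod_four_general n hsq
end

section
/- For every odd positive integer n that is not a perfect square, the number of overpartitions of n satisfies p̄(n) ≡ 0 (mod 8). -/
open PowerSeries

/-!
Write `g_k = q^k/(1-q^k) = ∑_{m > 0, k ∣ m} q^m`. Each factor is `(1+q^k)/(1-q^k) = 1 + 2 g_k`,
so modulo 8 the product is `1 + 2 ∑ g_k + 4 ∑_{k<l} g_k g_l`, and for `n > 0` this gives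
`p̄(n) ≡ 2 τ(n) + 4 Q(n) (mod 8)`, where `Q(n)` counts the partitions of `n` with exactly two
distinct part sizes. Conjugation is an involution on these partitions, so `Q(n)` has the parity of
the number of self-conjugate ones, which for odd `n` correspond to the factorisations `n = d e`
with `d < e`. When `n` is not a square there are `τ(n)/2` of these, so
`p̄(n) ≡ 4 (τ(n)/2 + Q(n)) ≡ 8 · τ(n)/2 ≡ 0 (mod 8)`.
-/

open Finset

theorem exists_prod_one_add_two_mul_eq {ι R : Type*} [LinearOrder ι] [CommSemiring R]
    (s : Finset ι) (f : ι → R) :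
    ∃ E : R, ∏ i ∈ s, (1 + 2 * f i) =
      1 + 2 * ∑ i ∈ s, f i + 4 * ∑ i ∈ s, ∑ j ∈ s with i < j, f i * f j + 8 * E := by
  induction s using Finset.induction_on_min with
  | empty => exact ⟨0, by simp⟩
  | insert a s ha ih =>
    obtain ⟨E, hE⟩ := ih
    have ha' : a ∉ s := fun h => lt_irrefl a (ha a h)
    have hpairs : ∑ i ∈ insert a s, ∑ j ∈ insert a s with i < j, f i * f j =
        f a * ∑ j ∈ s, f j + ∑ i ∈ s, ∑ j ∈ s with i < j, f i * f j := by
      rw [sum_insert ha', filter_insert, if_neg (lt_irrefl a), filter_true_of_mem ha, mul_sum]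
      congr 1
      refine sum_congr rfl fun i hi => ?_
      rw [filter_insert, if_neg (ha i hi).not_gt]
    refine ⟨E + f a * ∑ i ∈ s, ∑ j ∈ s with i < j, f i * f j + 2 * f a * E, ?_⟩
    rw [prod_insert ha', sum_insert ha', hpairs, hE]
    ring

theorem card_modEq_card_filter_fixed {α : Type*} [DecidableEq α] (s : Finset α) {g : α → α}
    (hg : ∀ a ∈ s, g a ∈ s) (hgg : ∀ a ∈ s, g (g a) = a) :
    #s ≡ #{a ∈ s | g a = a} [MOD 2] := by
  have hmoved : ((#{a ∈ s | g a ≠ a} : ℕ) : ZMod 2) = 0 := by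
    rw [card_eq_sum_ones, Nat.cast_sum, Nat.cast_one]
    refine sum_involution (fun a _ => g a) (fun _ _ => rfl) (fun a ha _ => (mem_filter.1 ha).2)
      (fun a ha => ?_) (fun a ha => hgg a (mem_filter.1 ha).1)
    obtain ⟨has, hga⟩ := mem_filter.1 ha
    exact mem_filter.2 ⟨hg a has, fun h => hga (by rw [← h, hgg a has])⟩
  rw [← ZMod.natCast_eq_natCast_iff, ← card_filter_add_card_filter_not (fun a => g a = a),
    Nat.cast_add, hmoved, add_zero]

theorem card_divisors_eq_two_mul_card_filter_lt {n : ℕ} (hn : ¬ IsSquare n) :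
    #n.divisors = 2 * #{p ∈ n.divisorsAntidiagonal | p.1 < p.2} := by
  have hcard : #n.divisors = #n.divisorsAntidiagonal := by
    rw [← Nat.map_div_right_divisors, card_map]
  rw [hcard, ← card_filter_add_card_filter_not (fun p : ℕ × ℕ => p.1 < p.2), two_mul]
  congr 1
  refine card_nbij' Prod.swap Prod.swap (fun p hp => ?_) (fun p hp => ?_)
    (fun _ _ => rfl) (fun _ _ => rfl)
  · simp only [mem_coe, mem_filter, Nat.mem_divisorsAntidiagonal, Prod.fst_swap,
      Prod.snd_swap] at hp ⊢
    have hne : p.1 ≠ p.2 := fun h => hn ⟨p.1, by rw [← hp.1.1, ← h]⟩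
    exact ⟨⟨by rw [mul_comm, hp.1.1], hp.1.2⟩, by omega⟩
  · simp only [mem_coe, mem_filter, Nat.mem_divisorsAntidiagonal, Prod.fst_swap,
      Prod.snd_swap] at hp ⊢
    exact ⟨⟨by rw [mul_comm, hp.1.1], hp.1.2⟩, hp.2.not_gt⟩

/-- `((k, l), (i, j))` stands for the partition of `n` into `i` parts `k` and `j` parts `l`. -/
def twoSizePartitions (n : ℕ) : Finset ((ℕ × ℕ) × ℕ × ℕ) :=
  {x ∈ (Icc 1 n ×ˢ Icc 1 n) ×ˢ (Icc 1 n ×ˢ Icc 1 n) |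
    x.1.1 < x.1.2 ∧ x.2.1 * x.1.1 + x.2.2 * x.1.2 = n}

theorem mem_twoSizePartitions {n k l i j : ℕ} :
    ((k, l), (i, j)) ∈ twoSizePartitions n ↔
      0 < k ∧ k < l ∧ 0 < i ∧ 0 < j ∧ i * k + j * l = n := by
  simp only [twoSizePartitions, mem_filter, mem_product, mem_Icc]
  constructor
  · rintro ⟨⟨⟨⟨hk, -⟩, -⟩, ⟨hi, -⟩, hj, -⟩, hkl, h⟩
    exact ⟨hk, hkl, hi, hj, h⟩
  · rintro ⟨hk, hkl, hi, hj, rfl⟩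
    refine ⟨⟨⟨⟨hk, ?_⟩, by omega, ?_⟩, ⟨hi, ?_⟩, hj, ?_⟩, hkl, rfl⟩ <;> nlinarith

/-- Conjugation (transposing the Young diagram) of the partitions in `twoSizePartitions`. -/
def twoSizeConj (x : (ℕ × ℕ) × ℕ × ℕ) : (ℕ × ℕ) × ℕ × ℕ :=
  ((x.2.2, x.2.1 + x.2.2), (x.1.2 - x.1.1, x.1.1))

theorem twoSizeConj_mem_twoSizePartitions {n : ℕ} {x : (ℕ × ℕ) × ℕ × ℕ}
    (hx : x ∈ twoSizePartitions n) :
    twoSizeConj x ∈ twoSizePartitions n := by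
  obtain ⟨⟨k, l⟩, i, j⟩ := x
  obtain ⟨hk, hkl, hi, hj, rfl⟩ := mem_twoSizePartitions.1 hx
  obtain ⟨d, rfl⟩ := Nat.exists_eq_add_of_lt hkl
  simp only [twoSizeConj, mem_twoSizePartitions]
  refine ⟨hj, by omega, by omega, hk, ?_⟩
  rw [show k + d + 1 - k = d + 1 by omega]
  ring

theorem twoSizeConj_twoSizeConj {n : ℕ} {x : (ℕ × ℕ) × ℕ × ℕ}
    (hx : x ∈ twoSizePartitions n) :
    twoSizeConj (twoSizeConj x) = x := by
  obtain ⟨⟨k, l⟩, i, j⟩ := x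
  have hkl := (mem_twoSizePartitions.1 hx).2.1
  simp only [twoSizeConj, Prod.mk.injEq, true_and, and_true]
  omega

theorem card_filter_twoSizeConj_eq {n : ℕ} (hn : Odd n) :
    #{x ∈ twoSizePartitions n | twoSizeConj x = x} =
      #{p ∈ n.divisorsAntidiagonal | p.1 < p.2} := by
  -- A self-conjugate `((k, l), (i, j))` is a `k × k` square with a `k × i` block to its right
  -- and an `i × k` block below it, so `n = k (k + 2 i)`; for odd `n`, `d e = n` forces `2 ∣ e - d`.
  refine card_nbij' (fun x => (x.1.1, x.2.1 + x.1.2))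
    (fun p => ((p.1, (p.1 + p.2) / 2), ((p.2 - p.1) / 2, p.1))) ?_ ?_ ?_ ?_
  · rintro ⟨⟨k, l⟩, i, j⟩ hx
    rw [mem_coe, mem_filter] at hx ⊢
    simp only [mem_twoSizePartitions, twoSizeConj, Prod.mk.injEq,
      Nat.mem_divisorsAntidiagonal] at hx ⊢
    obtain ⟨⟨hk, hkl, hi, hj, rfl⟩, ⟨rfl, rfl⟩, -⟩ := hx
    exact ⟨⟨by ring, by positivity⟩, by omega⟩
  · rintro ⟨d, e⟩ hp
    rw [mem_coe, mem_filter] at hp ⊢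
    simp only [mem_twoSizePartitions, twoSizeConj, Prod.mk.injEq,
      Nat.mem_divisorsAntidiagonal, true_and, and_true] at hp ⊢
    obtain ⟨⟨rfl, hn0⟩, hde⟩ := hp
    obtain ⟨t, ht⟩ : Even (e - d) := Nat.Odd.sub_odd (Nat.Odd.of_mul_right hn)
      (Nat.Odd.of_mul_left hn)
    obtain rfl : e = d + 2 * t := by omega
    have hd : 0 < d := Nat.pos_of_ne_zero (left_ne_zero_of_mul hn0)
    rw [show (d + (d + 2 * t)) / 2 = d + t by omega, show (d + 2 * t - d) / 2 = t by omega]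
    exact ⟨⟨hd, by omega, by omega, hd, by ring⟩, by omega, by omega⟩
  · rintro ⟨⟨k, l⟩, i, j⟩ hx
    rw [mem_coe, mem_filter] at hx
    simp only [twoSizeConj, Prod.mk.injEq] at hx
    obtain ⟨-, ⟨rfl, rfl⟩, -⟩ := hx
    simp only [Prod.mk.injEq, true_and, and_true]
    omega
  · rintro ⟨d, e⟩ hp
    simp only [mem_coe, mem_filter, Nat.mem_divisorsAntidiagonal] at hp
    obtain ⟨⟨rfl, -⟩, hde⟩ := hp
    obtain ⟨t, ht⟩ : Even (e - d) := Nat.Odd.sub_odd (Nat.Odd.of_mul_right hn)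
      (Nat.Odd.of_mul_left hn)
    simp only [Prod.mk.injEq, true_and]
    omega

section MultiplesSeries

variable (R : Type*) [Semiring R]

def multiplesSeries (k : ℕ) : R⟦X⟧ :=
  mk fun m => if 0 < m ∧ k ∣ m then 1 else 0

variable {R}

@[simp]
theorem coeff_multiplesSeries (k m : ℕ) :
    coeff m (multiplesSeries R k) = if 0 < m ∧ k ∣ m then 1 else 0 :=
  coeff_mk _ _

theorem coeff_sum_multiplesSeries {n : ℕ} (hn : n ≠ 0) :
    coeff n (∑ k ∈ Icc 1 n, multiplesSeries R k) = #n.divisors := by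
  have hdiv : {k ∈ Icc 1 n | k ∣ n} = n.divisors := by
    rw [Nat.divisors, Ico_add_one_right_eq_Icc]
  simp [map_sum, Nat.pos_of_ne_zero hn, ← hdiv]

theorem coeff_multiplesSeries_mul {k l : ℕ} (hk : 0 < k) (hl : 0 < l) (n : ℕ) :
    coeff n (multiplesSeries R k * multiplesSeries R l) =
      #{p ∈ Icc 1 n ×ˢ Icc 1 n | p.1 * k + p.2 * l = n} := by
  simp only [coeff_mul, coeff_multiplesSeries, ite_zero_mul_ite_zero, one_mul]
  rw [sum_boole]
  congr 1
  symm
  refine card_nbij' (fun p => (p.1 * k, p.2 * l)) (fun p => (p.1 / k, p.2 / l)) ?_ ?_ ?_ ?_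
  · rintro ⟨i, j⟩ hij
    simp only [mem_coe, mem_filter, mem_product, mem_Icc,
      HasAntidiagonal.mem_antidiagonal] at hij ⊢
    exact ⟨hij.2, ⟨Nat.mul_pos hij.1.1.1 hk, dvd_mul_left _ _⟩,
      Nat.mul_pos hij.1.2.1 hl, dvd_mul_left _ _⟩
  · rintro ⟨a, b⟩ hab
    simp only [mem_coe, mem_filter, mem_product, mem_Icc,
      HasAntidiagonal.mem_antidiagonal] at hab ⊢
    obtain ⟨rfl, ⟨ha, ⟨i, rfl⟩⟩, hb, ⟨j, rfl⟩⟩ := hab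
    simp only [Nat.mul_div_cancel_left _ hk, Nat.mul_div_cancel_left _ hl]
    refine ⟨⟨⟨?_, ?_⟩, ?_, ?_⟩, by ring⟩ <;> nlinarith
  · rintro ⟨i, j⟩ -
    simp [Nat.mul_div_cancel _ hk, Nat.mul_div_cancel _ hl]
  · rintro ⟨a, b⟩ hab
    simp only [mem_coe, mem_filter, HasAntidiagonal.mem_antidiagonal] at hab
    simp [Nat.div_mul_cancel hab.2.1.2, Nat.div_mul_cancel hab.2.2.2]

theorem coeff_sum_pairs_multiplesSeries (n : ℕ) :
    coeff n (∑ k ∈ Icc 1 n, ∑ l ∈ Icc 1 n with k < l,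
      multiplesSeries R k * multiplesSeries R l) = #(twoSizePartitions n) := by
  rw [twoSizePartitions, card_filter, sum_product, sum_product, map_sum, Nat.cast_sum]
  refine sum_congr rfl fun k hk => ?_
  rw [map_sum, sum_filter, Nat.cast_sum]
  refine sum_congr rfl fun l hl => ?_
  split_ifs with hkl
  · rw [coeff_multiplesSeries_mul (mem_Icc.1 hk).1 (mem_Icc.1 hl).1, card_filter]
    simp [hkl]
  · simp [hkl]

end MultiplesSeries

theorem one_sub_X_pow_mul_multiplesSeries {R : Type*} [Ring R] {k : ℕ} (hk : 0 < k) :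
    (1 - X ^ k) * multiplesSeries R k = X ^ k := by
  ext m
  rw [sub_mul, one_mul, map_sub, coeff_X_pow_mul', coeff_multiplesSeries, coeff_X_pow]
  rcases lt_trichotomy k m with hlt | rfl | hgt
  · simp [hlt.le, hlt.ne', hlt.not_ge, hk.trans hlt, Nat.sub_pos_of_lt hlt,
      Nat.dvd_sub_self_right]
  · simp [hk]
  · have : ¬ (0 < m ∧ k ∣ m) := fun h => hgt.not_ge (Nat.le_of_dvd h.1 h.2)
    simp [this, hgt.not_ge, hgt.ne]

theorem fps_eq_one_add_two_mul_multiplesSeries {k : ℕ} (hk : 0 < k) :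
    fps k = 1 + 2 * multiplesSeries ℤ k := by
  have hinv : (1 - X ^ k : ℤ⟦X⟧) * invOfUnit (1 - X ^ k) 1 = 1 :=
    mul_invOfUnit _ _ (by simp [hk.ne'])
  calc fps k = (1 - X ^ k) * (1 + 2 * multiplesSeries ℤ k) * invOfUnit (1 - X ^ k) 1 := by
        rw [fps, mul_add, mul_one, mul_left_comm, one_sub_X_pow_mul_multiplesSeries hk]
        ring
    _ = 1 + 2 * multiplesSeries ℤ k := by rw [mul_right_comm, hinv, one_mul]

theorem exists_pbar_eq {n : ℕ} (hn : n ≠ 0) :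
    ∃ c : ℤ, pbar n = 2 * #n.divisors + 4 * #(twoSizePartitions n) + 8 * c := by
  obtain ⟨E, hE⟩ := exists_prod_one_add_two_mul_eq (Icc 1 n) (multiplesSeries ℤ)
  refine ⟨coeff n E, ?_⟩
  rw [pbar, prod_congr rfl fun k hk => fps_eq_one_add_two_mul_multiplesSeries (mem_Icc.1 hk).1,
    hE]
  simp only [map_add, ← map_ofNat (C (R := ℤ)), coeff_C_mul, coeff_one, if_neg hn,
    coeff_sum_multiplesSeries hn, coeff_sum_pairs_multiplesSeries]
  ring

theorem pbar_odd_nonsquare_mod_eight_general (n : ℕ) (hodd : Odd n)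
    (hsq : ¬ IsSquare n) : pbar n ≡ 0 [ZMOD 8] := by
  have hn : n ≠ 0 := by rintro rfl; exact hsq IsSquare.zero
  obtain ⟨c, hc⟩ := exists_pbar_eq hn
  have hdiv := card_divisors_eq_two_mul_card_filter_lt hsq
  have hpar : #(twoSizePartitions n) ≡ #{p ∈ n.divisorsAntidiagonal | p.1 < p.2} [MOD 2] := by
    rw [← card_filter_twoSizeConj_eq hodd]
    exact card_modEq_card_filter_fixed _ (fun _ => twoSizeConj_mem_twoSizePartitions)
      (fun _ => twoSizeConj_twoSizeConj)
  rw [Int.modEq_zero_iff_dvd, hc, hdiv]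
  unfold Nat.ModEq at hpar
  omega

/-- For every odd positive nonsquare integer `n`, `p̄(n) ≡ 0 (mod 8)`. -/
theorem pbar_odd_nonsquare_mod_eight (n : ℕ) (hn : 1 ≤ n) (hodd : Odd n)
    (hsq : ¬ IsSquare n) : pbar n ≡ 0 [ZMOD 8] :=
  pbar_odd_nonsquare_mod_eight_general n hodd hsq
end

section
/- For all integers n ≥ 1, pl̄_4(12n) ≡ 0 (mod 8) and pl̄_4(6n+3) ≡ 0 (mod 8), where pl̄_4 counts plane overpartitions with at most 4 rows. -/
/-!
Modulo 2 every factor `(1+q^k)/(1-q^k) = 1 + 2q^k/(1-q^k)` is `1`, so the overpartition product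
`S = ∏ (1+q^k)/(1-q^k)` has the form `1 + 2a`, and then `S^4 = (1 + 2a)^4 ≡ 1 (mod 8)`.
The exponents `min(4,k)` fall short of `4` only for `k = 1, 2, 3`, so the generating function
of `pl̄₄` times `D = ∏_{k ≤ 3} ((1+q^k)/(1-q^k))^(4-k)` is `S^4`, i.e. it is `D⁻¹` modulo 8.
Clearing denominators, a polynomial identity gives `D⁻¹ ≡ H/(1-q^12) (mod 8)` with `H` of
degree 12. Hence the coefficients are periodic of period 12 from index 1 on, and they vanish at
`3` and `9` (where `H` has no term) and at `12` (where the coefficients of `H` at `1` and `q^12`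
cancel).
-/

open PowerSeries

/-- The number of plane overpartitions of `n` with at most `K` rows: the coefficient
of `q^n` in `∏_{k≥1} ((1+q^k)/(1-q^k))^(min K k)`, truncated at `k = n`. -/
noncomputable def plbark (K n : ℕ) : ℤ :=
  PowerSeries.coeff (R := ℤ) n (∏ k ∈ Finset.Icc 1 n, fps k ^ min K k)

open Finset

namespace PlbarFourModEight

theorem fps_eq_one_add_two_mul {k : ℕ} (hk : k ≠ 0) :
    fps k = 1 + 2 * (X ^ k * invOfUnit (1 - X ^ k) 1) := by
  rw [fps]
  linear_combination mul_invOfUnit (1 - X ^ k : ℤ⟦X⟧) 1 (by simp [zero_pow hk])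

theorem fps_mul_one_sub_X_pow {k : ℕ} (hk : k ≠ 0) : fps k * (1 - X ^ k) = 1 + X ^ k := by
  rw [fps]
  linear_combination (1 + X ^ k) * mul_invOfUnit (1 - X ^ k : ℤ⟦X⟧) 1 (by simp [zero_pow hk])

theorem exists_prod_fps_eq_one_add_two_mul (m : ℕ) :
    ∃ a, ∏ k ∈ Icc 1 m, fps k = 1 + 2 * a := by
  refine prod_induction _ (fun x => ∃ a, x = 1 + 2 * a) ?_ ⟨0, by ring⟩ ?_
  · rintro _ _ ⟨a, rfl⟩ ⟨b, rfl⟩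
    exact ⟨a + b + 2 * a * b, by ring⟩
  · intro k hk
    exact ⟨_, fps_eq_one_add_two_mul (by grind)⟩

theorem one_add_two_mul_pow_four {R : Type*} [CommRing R] (h8 : (8 : R) = 0) (a : R) :
    (1 + 2 * a) ^ 4 = 1 := by
  linear_combination (a + 3 * a ^ 2 + 4 * a ^ 3 + 2 * a ^ 4) * h8

theorem eight_eq_zero : (8 : (ZMod 8)⟦X⟧) = 0 := by
  rw [← map_ofNat C 8]
  exact map_zero C

theorem map_prod_fps_pow_four (m : ℕ) :
    map (Int.castRingHom (ZMod 8)) ((∏ k ∈ Icc 1 m, fps k) ^ 4) = 1 := by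
  obtain ⟨a, ha⟩ := exists_prod_fps_eq_one_add_two_mul m
  rw [ha, map_pow, map_add, map_one, map_mul, map_ofNat]
  exact one_add_two_mul_pow_four eight_eq_zero _

theorem prod_pow_min_mul_prod_pow_sub {M : Type*} [CommMonoid M] (f : ℕ → M) {K m : ℕ}
    (h : K ≤ m) :
    (∏ k ∈ Icc 1 m, f k ^ min K k) * ∏ k ∈ Icc 1 K, f k ^ (K - k) =
      (∏ k ∈ Icc 1 m, f k) ^ K := by
  have hext : ∏ k ∈ Icc 1 K, f k ^ (K - k) = ∏ k ∈ Icc 1 m, f k ^ (K - k) :=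
    prod_subset_one_on_sdiff (Icc_subset_Icc_right h)
      (fun k hk => by rw [Nat.sub_eq_zero_of_le (by grind), pow_zero])
      (fun _ _ => rfl)
  rw [hext, ← prod_mul_distrib, ← prod_pow]
  exact prod_congr rfl fun k _ => by rw [← pow_add]; congr 1; omega

noncomputable def numerator : (ZMod 8)⟦X⟧ :=
  1 + 2 * X - 2 * X ^ 2 - 2 * X ^ 4 - 2 * X ^ 5 + 4 * X ^ 6 + 2 * X ^ 7 + 2 * X ^ 8
    + 2 * X ^ 10 - 2 * X ^ 11 - X ^ 12

theorem map_prod_fps_pow_sub_mul_numerator :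
    map (Int.castRingHom (ZMod 8)) (∏ k ∈ Icc 1 4, fps k ^ (4 - k)) * numerator =
      1 - X ^ 12 := by
  have hu {k : ℕ} (hk : k ≠ 0) :
      map (Int.castRingHom (ZMod 8)) (fps k) * (1 - X ^ k) = 1 + X ^ k := by
    simpa using congrArg (map (Int.castRingHom (ZMod 8))) (fps_mul_one_sub_X_pow hk)
  have hD : ∏ k ∈ Icc 1 4, fps k ^ (4 - k) = fps 1 ^ 3 * fps 2 ^ 2 * fps 3 := by
    simp [prod_Icc_succ_top]
  have hM : IsUnit ((1 - X ^ 1 : (ZMod 8)⟦X⟧) ^ 3 * (1 - X ^ 2) ^ 2 * (1 - X ^ 3)) :=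
    isUnit_iff_constantCoeff.mpr (by simp)
  have hprod : map (Int.castRingHom (ZMod 8)) (∏ k ∈ Icc 1 4, fps k ^ (4 - k)) *
      ((1 - X ^ 1) ^ 3 * (1 - X ^ 2) ^ 2 * (1 - X ^ 3)) =
      (1 + X ^ 1) ^ 3 * (1 + X ^ 2) ^ 2 * (1 + X ^ 3) := by
    rw [hD, map_mul, map_mul, map_pow, map_pow, ← hu one_ne_zero, ← hu two_ne_zero,
      ← hu three_ne_zero]
    ring
  rw [← hM.mul_left_inj, mul_right_comm, hprod, numerator]
  linear_combination (X + X ^ 2 + X ^ 3 + 2 * X ^ 4 + X ^ 5 - X ^ 7 - X ^ 8 + X ^ 9 + 3 * X ^ 10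
    + 5 * X ^ 11 + 7 * X ^ 12 + 7 * X ^ 13 + 6 * X ^ 14 + 4 * X ^ 15 + X ^ 16 - X ^ 17
    - 2 * X ^ 18 - X ^ 19 - X ^ 20 - X ^ 21) * eight_eq_zero

theorem map_prod_fps_pow_min_mul_one_sub_X_pow {m : ℕ} (hm : 4 ≤ m) :
    map (Int.castRingHom (ZMod 8)) (∏ k ∈ Icc 1 m, fps k ^ min 4 k) * (1 - X ^ 12) =
      numerator := by
  rw [← map_prod_fps_pow_sub_mul_numerator, ← mul_assoc, ← map_mul,
    prod_pow_min_mul_prod_pow_sub fps hm, map_prod_fps_pow_four, one_mul]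

section Periodic

variable {R : Type*} [CommRing R] {G H : R⟦X⟧} {d : ℕ}

theorem coeff_eq_of_mul_one_sub_X_pow_eq (h : G * (1 - X ^ d) = H) {m : ℕ} (hm : m < d) :
    coeff m G = coeff m H := by
  rw [← h, mul_sub, mul_one, map_sub, coeff_mul_X_pow', if_neg (by omega), sub_zero]

theorem coeff_add_of_mul_one_sub_X_pow_eq (h : G * (1 - X ^ d) = H) (m : ℕ) :
    coeff (m + d) G = coeff m G + coeff (m + d) H := by
  rw [← h, mul_sub, mul_one, map_sub, coeff_mul_X_pow]
  ring

end Periodic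

theorem coeff_numerator_of_twelve_lt {m : ℕ} (hm : 12 < m) : coeff m numerator = 0 := by
  simp (disch := omega) [numerator, ← map_ofNat (C (R := ZMod 8)), coeff_X, coeff_X_pow,
    coeff_one, if_neg]

section Numerator

variable {G : (ZMod 8)⟦X⟧}

theorem coeff_twelve_mul_eq_zero (hG : G * (1 - X ^ 12) = numerator) {n : ℕ} (hn : 1 ≤ n) :
    coeff (12 * n) G = 0 := by
  induction n, hn using Nat.le_induction with
  | base =>
    rw [← zero_add (12 * 1), coeff_add_of_mul_one_sub_X_pow_eq hG,
      coeff_eq_of_mul_one_sub_X_pow_eq hG (by norm_num)]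
    simp [numerator, ← map_ofNat (C (R := ZMod 8)), coeff_X_pow]
  | succ n hn ih =>
    rw [mul_add_one, coeff_add_of_mul_one_sub_X_pow_eq hG, ih,
      coeff_numerator_of_twelve_lt (by omega), add_zero]

theorem coeff_six_mul_add_three_eq_zero (hG : G * (1 - X ^ 12) = numerator) (n : ℕ) :
    coeff (6 * n + 3) G = 0 := by
  induction n using Nat.strong_induction_on with
  | _ n ih =>
    rcases lt_or_ge n 2 with hn | hn
    · rw [coeff_eq_of_mul_one_sub_X_pow_eq hG (by omega)]
      interval_cases n <;> simp [numerator, ← map_ofNat (C (R := ZMod 8)), coeff_X_pow]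
    · obtain ⟨k, rfl⟩ := Nat.exists_eq_add_of_le' hn
      rw [show 6 * (k + 2) + 3 = 6 * k + 3 + 12 by ring, coeff_add_of_mul_one_sub_X_pow_eq hG,
        ih k (by omega), coeff_numerator_of_twelve_lt (by omega), add_zero]

end Numerator

theorem intCast_plbark (K m q : ℕ) :
    ((plbark K m : ℤ) : ZMod q) =
      coeff m (map (Int.castRingHom (ZMod q)) (∏ k ∈ Icc 1 m, fps k ^ min K k)) := by
  rw [plbark, coeff_map, eq_intCast]

end PlbarFourModEight

open PlbarFourModEight in
/-- For all `n ≥ 1`, `pl̄₄(12n) ≡ 0 (mod 8)` and `pl̄₄(6n+3) ≡ 0 (mod 8)`. -/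
theorem plbark_four_mod_eight (n : ℕ) (hn : 1 ≤ n) :
    plbark 4 (12 * n) ≡ 0 [ZMOD 8] ∧ plbark 4 (6 * n + 3) ≡ 0 [ZMOD 8] := by
  refine ⟨(ZMod.intCast_eq_intCast_iff _ 0 8).1 ?_, (ZMod.intCast_eq_intCast_iff _ 0 8).1 ?_⟩ <;>
    rw [Int.cast_zero, intCast_plbark]
  exacts [coeff_twelve_mul_eq_zero (map_prod_fps_pow_min_mul_one_sub_X_pow (by omega)) hn,
    coeff_six_mul_add_three_eq_zero (map_prod_fps_pow_min_mul_one_sub_X_pow (by omega)) n]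
end
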